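/- For every k ∈ (0,1), every integer n, and every v ∈ ℝ, one has J₁(nπ, v, k) = 16·n²·k·E(k)·(E(k) − (1−k²)·K(k))·sin²v, and in particular J₁(nπ, v, k) ≥ 0. (The value of the Jacobian numerator J₁ at p = 2nK(k), i.e. u = am(2nK(k),k) = nπ, is nonnegative.) -/

import Mathlib

open Real

/-- Incomplete elliptic integral of the first kind in Legendre form:
`F(u,k) = ∫₀ᵘ dφ/√(1 − k² sin² φ)`. -/
noncomputable def EllF (u k : ℝ) : ℝ :=
  ∫ φ in (0:ℝ)..u, 1 / Real.sqrt (1 - k ^ 2 * Real.sin φ ^ 2)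

/-- Incomplete elliptic integral of the second kind in Legendre form:
`E(u,k) = ∫₀ᵘ √(1 − k² sin² φ) dφ`. -/
noncomputable def EllE (u k : ℝ) : ℝ :=
  ∫ φ in (0:ℝ)..u, Real.sqrt (1 - k ^ 2 * Real.sin φ ^ 2)

/-- The numerator `J₁(u,v,k) = −4k(α₁ + α₂ + α₃)` of the Jacobian of the exponential
mapping of the sub-Riemannian problem on SH(2), in Legendre variables `u = am(p,k)`,
`v = am(τ,k)`. -/
noncomputable def J₁ (u v k : ℝ) : ℝ :=
  -4 * k *
    ((Real.sin u * Real.cos u * Real.sqrt (1 - k ^ 2 * Real.sin u ^ 2) *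
        (2 * EllE u k - (1 - k ^ 2) * EllF u k)) +
     (-(1 - k ^ 2 * Real.sin u ^ 2) * Real.sin u ^ 2 -
        k ^ 2 * Real.sin u ^ 2 * Real.cos v ^ 2) +
     (EllE u k * (Real.sin u ^ 2 - Real.sin v ^ 2) *
        (EllE u k - (1 - k ^ 2) * EllF u k)))


/-! At `u = nπ` we have `sin u = 0`, which kills `α₁`, `α₂` and the `sin² u` term of `α₃`, so
`J₁(nπ, v, k) = 4k E(nπ,k) (E(nπ,k) − (1−k²) F(nπ,k)) sin² v`. Both integrands are `π`-periodic
and symmetric about `π/2`, whence `E(nπ,k) = 2n E(k)` and `F(nπ,k) = 2n K(k)`. Finally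
`E(k) ≥ (1−k²) K(k)` because, with `Δ = 1 − k² sin² φ`, the integrands satisfy
`(1−k²)/√Δ ≤ √Δ`, i.e. `1 − k² ≤ Δ`. -/

open Function intervalIntegral
open MeasureTheory (volume)

theorem integral_eq_two_mul_integral_half_of_symm {f : ℝ → ℝ} {T : ℝ}
    (hf : ∀ a b, IntervalIntegrable f volume a b) (hsym : ∀ x, f (T - x) = f x) :
    ∫ x in (0:ℝ)..T, f x = 2 * ∫ x in (0:ℝ)..T / 2, f x := by
  have hsecond : ∫ x in T / 2..T, f x = ∫ x in (0:ℝ)..T / 2, f x := by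
    simpa [hsym, show T - T / 2 = T / 2 by ring] using
      (integral_comp_sub_left f T (a := 0) (b := T / 2)).symm
  rw [← integral_add_adjacent_intervals (hf 0 (T / 2)) (hf (T / 2) T), hsecond]
  ring

theorem Periodic.integral_zero_intCast_mul_of_symm {f : ℝ → ℝ} {T : ℝ}
    (hp : Periodic f T) (hf : ∀ a b, IntervalIntegrable f volume a b)
    (hsym : ∀ x, f (T - x) = f x) (n : ℤ) :
    ∫ x in (0:ℝ)..n * T, f x = 2 * n * ∫ x in (0:ℝ)..T / 2, f x := by
  have := hp.intervalIntegral_add_zsmul_eq n 0 hf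
  simp only [zero_add, zsmul_eq_mul] at this
  rw [this, integral_eq_two_mul_integral_half_of_symm hf hsym]
  ring

section Legendre

variable {k : ℝ}

theorem one_sub_sq_mul_sin_sq_pos (hk : k ^ 2 < 1) (φ : ℝ) : 0 < 1 - k ^ 2 * sin φ ^ 2 := by
  nlinarith [mul_le_of_le_one_right (sq_nonneg k) (sin_sq_le_one φ)]

theorem continuous_inv_sqrt_one_sub_sq_mul_sin_sq (hk : k ^ 2 < 1) :
    Continuous fun φ => 1 / √(1 - k ^ 2 * sin φ ^ 2) :=
  continuous_const.div (by fun_prop) fun φ => (sqrt_pos.2 (one_sub_sq_mul_sin_sq_pos hk φ)).ne'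

theorem EllE_intCast_mul_pi (n : ℤ) : EllE (n * π) k = 2 * n * EllE (π / 2) k :=
  Periodic.integral_zero_intCast_mul_of_symm (fun φ => by simp [sin_add_pi])
    (fun _ _ => (by fun_prop : Continuous _).intervalIntegrable _ _)
    (fun φ => by simp [sin_pi_sub]) n

theorem EllF_intCast_mul_pi (hk : k ^ 2 < 1) (n : ℤ) :
    EllF (n * π) k = 2 * n * EllF (π / 2) k :=
  Periodic.integral_zero_intCast_mul_of_symm (fun φ => by simp [sin_add_pi])
    (fun _ _ => (continuous_inv_sqrt_one_sub_sq_mul_sin_sq hk).intervalIntegrable _ _)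
    (fun φ => by simp [sin_pi_sub]) n

theorem EllE_nonneg {u : ℝ} (hu : 0 ≤ u) : 0 ≤ EllE u k :=
  integral_nonneg hu fun _ _ => sqrt_nonneg _

theorem one_sub_sq_mul_EllF_le_EllE (hk : k ^ 2 < 1) {u : ℝ} (hu : 0 ≤ u) :
    (1 - k ^ 2) * EllF u k ≤ EllE u k := by
  rw [EllF, EllE, ← intervalIntegral.integral_const_mul]
  refine integral_mono_on hu
    (((continuous_inv_sqrt_one_sub_sq_mul_sin_sq hk).const_mul _).intervalIntegrable _ _)
    ((by fun_prop : Continuous _).intervalIntegrable _ _) fun φ _ => ?_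
  have hΔ := one_sub_sq_mul_sin_sq_pos hk φ
  rw [mul_one_div, div_le_iff₀ (sqrt_pos.2 hΔ), mul_self_sqrt hΔ.le]
  nlinarith [mul_le_of_le_one_right (sq_nonneg k) (sin_sq_le_one φ)]

end Legendre

theorem J₁_of_sin_eq_zero {u k : ℝ} (hu : sin u = 0) (v : ℝ) :
    J₁ u v k = 4 * k * EllE u k * (EllE u k - (1 - k ^ 2) * EllF u k) * sin v ^ 2 := by
  rw [J₁, hu]
  ring

/-- For every `k ∈ (0,1)`, every integer `n`, and every `v ∈ ℝ`:
`J₁(nπ, v, k) = 16 n² k E(k) (E(k) − (1−k²)K(k)) sin² v ≥ 0`. -/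
theorem J1_at_npi (k : ℝ) (hk : k ∈ Set.Ioo (0:ℝ) 1) (n : ℤ) (v : ℝ) :
    J₁ ((n:ℝ) * π) v k =
      16 * (n:ℝ) ^ 2 * k * EllE (π / 2) k *
        (EllE (π / 2) k - (1 - k ^ 2) * EllF (π / 2) k) * Real.sin v ^ 2 ∧
    0 ≤ J₁ ((n:ℝ) * π) v k := by
  have hk2 : k ^ 2 < 1 := pow_lt_one₀ hk.1.le hk.2 two_ne_zero
  have heq : J₁ (n * π) v k = 16 * (n:ℝ) ^ 2 * k * EllE (π / 2) k *
      (EllE (π / 2) k - (1 - k ^ 2) * EllF (π / 2) k) * sin v ^ 2 := by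
    rw [J₁_of_sin_eq_zero (sin_int_mul_pi n), EllE_intCast_mul_pi, EllF_intCast_mul_pi hk2]
    ring
  have hπ : (0:ℝ) ≤ π / 2 := by positivity
  have hE : 0 ≤ EllE (π / 2) k := EllE_nonneg hπ
  have hD : 0 ≤ EllE (π / 2) k - (1 - k ^ 2) * EllF (π / 2) k :=
    sub_nonneg.2 (one_sub_sq_mul_EllF_le_EllE hk2 hπ)
  have hk0 : 0 ≤ 16 * (n:ℝ) ^ 2 * k := mul_nonneg (by positivity) hk.1.le
  exact ⟨heq, heq ▸ mul_nonneg (mul_nonneg (mul_nonneg hk0 hE) hD) (sq_nonneg _)⟩
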